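/- For the 2-form ω on ℂ³ as above with a > 1: the top power ω³ is a positive multiple of the standard volume form on ℂ³ (so the ω-orientation of ℂ³ is the complex orientation), while for each i the restriction ω²|_{ℂ³_i} is a negative multiple of the standard volume form on ℂ³_i (so the ω-orientation of each coordinate hyperplane is the opposite of the complex orientation). -/

import Mathlib

/-! Since `-dyᵢ ∧ dxⱼ = dxⱼ ∧ dyᵢ`, `ω = ∑ᵢⱼ Sᵢⱼ dxᵢ ∧ dyⱼ` with
`S = [[1, a, a], [a, 1, a], [a, a, 1]]`, and the coefficient of `ω ^ k` on a `k`-dimensional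
coordinate subspace is `k!` times the corresponding principal minor of `S`: this gives
`3! det S = 6 (1 - a)² (1 + 2a)` on `ℂ³` and `2! (1 - a²)` on each coordinate hyperplane.
Both are identities in the exterior algebra of any module, obtained by expanding the powers
and sorting the monomials. -/

set_option synthInstance.maxHeartbeats 1000000
set_option maxHeartbeats 1000000

open ExteriorAlgebra

/-- The real-linear functional `dx_i = Re ∘ z_i` on `ℂ^n`. -/
noncomputable def dxF (n : ℕ) (i : Fin n) : Module.Dual ℝ (Fin n → ℂ) :=
  Complex.reLm.comp ((LinearMap.proj i : (Fin n → ℂ) →ₗ[ℂ] ℂ).restrictScalars ℝ)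

/-- The real-linear functional `dy_i = Im ∘ z_i` on `ℂ^n`. -/
noncomputable def dyF (n : ℕ) (i : Fin n) : Module.Dual ℝ (Fin n → ℂ) :=
  Complex.imLm.comp ((LinearMap.proj i : (Fin n → ℂ) →ₗ[ℂ] ℂ).restrictScalars ℝ)

/-- `dx_i` as a degree-1 element of the exterior algebra of the dual of `ℂ^n`. -/
noncomputable def dxE (n : ℕ) (i : Fin n) :
    ExteriorAlgebra ℝ (Module.Dual ℝ (Fin n → ℂ)) :=
  ExteriorAlgebra.ι ℝ (dxF n i)

/-- `dy_i` as a degree-1 element of the exterior algebra of the dual of `ℂ^n`. -/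
noncomputable def dyE (n : ℕ) (i : Fin n) :
    ExteriorAlgebra ℝ (Module.Dual ℝ (Fin n → ℂ)) :=
  ExteriorAlgebra.ι ℝ (dyF n i)

/-- The coordinate area form `dx_i ∧ dy_i`. -/
noncomputable def dxyE (n : ℕ) (i : Fin n) :
    ExteriorAlgebra ℝ (Module.Dual ℝ (Fin n → ℂ)) :=
  dxE n i * dyE n i

/-- The complex volume form of the coordinate subspace `ℂ^n_I`: the wedge of
`dx_i ∧ dy_i` over `i ∉ I` (in increasing order). -/
noncomputable def volForm (n : ℕ) (I : Finset (Fin n)) :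
    ExteriorAlgebra ℝ (Module.Dual ℝ (Fin n → ℂ)) :=
  (((Iᶜ).sort (· ≤ ·)).map fun i => dxyE n i).prod

/-- The projection of `ℂ^n` onto the coordinate subspace `ℂ^n_I` (setting the
coordinates in `I` to zero). -/
noncomputable def coordProj (n : ℕ) (I : Finset (Fin n)) :
    (Fin n → ℂ) →ₗ[ℝ] (Fin n → ℂ) where
  toFun z := fun i => if i ∈ I then 0 else z i
  map_add' := by intro a b; funext i; by_cases h : i ∈ I <;> simp [h]
  map_smul' := by intro c a; funext i; by_cases h : i ∈ I <;> simp [h]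

/-- Pullback of exterior forms on `ℂ^n` along the projection onto `ℂ^n_I`; this computes
the restriction of a form to the coordinate subspace `ℂ^n_I`. -/
noncomputable def pullbackI (n : ℕ) (I : Finset (Fin n)) :
    ExteriorAlgebra ℝ (Module.Dual ℝ (Fin n → ℂ)) →ₐ[ℝ]
      ExteriorAlgebra ℝ (Module.Dual ℝ (Fin n → ℂ)) :=
  ExteriorAlgebra.map ((coordProj n I).dualMap)

/-- The subspace of genuine (grade-2) alternating 2-forms inside the exterior algebra. -/
noncomputable def grade2 (n : ℕ) :
    Submodule ℝ (ExteriorAlgebra ℝ (Module.Dual ℝ (Fin n → ℂ))) :=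
  LinearMap.range (ExteriorAlgebra.ι ℝ (M := Module.Dual ℝ (Fin n → ℂ))) ^ 2

/-- The 2-form of Example 2.7 of the paper, on `ℂ³ ≅ ℝ⁶`. -/
noncomputable def omegaA (a : ℝ) : ExteriorAlgebra ℝ (Module.Dual ℝ (Fin 3 → ℂ)) :=
  (∑ i : Fin 3, dxyE 3 i)
    + a • (dxE 3 0 * dyE 3 1 - dyE 3 0 * dxE 3 1)
    + a • (dxE 3 0 * dyE 3 2 - dyE 3 0 * dxE 3 2)
    + a • (dxE 3 1 * dyE 3 2 - dyE 3 1 * dxE 3 2)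


namespace ExteriorAlgebra

variable {R M : Type*} [CommRing R] [AddCommGroup M] [Module R M]

theorem ι_mul_ι_swap (x y : M) : ι R x * ι R y = -(ι R y * ι R x) :=
  eq_neg_of_add_eq_zero_left (ι_add_mul_swap x y)

theorem ι_mul_ι_mul_self (x : M) (c : ExteriorAlgebra R M) : ι R x * (ι R x * c) = 0 := by
  rw [← mul_assoc, ι_sq_zero, zero_mul]

theorem ι_mul_ι_mul_swap (x y : M) (c : ExteriorAlgebra R M) :
    ι R x * (ι R y * c) = -(ι R y * (ι R x * c)) := by
  rw [← mul_assoc, ι_mul_ι_swap, neg_mul, mul_assoc]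

/- In both identities, indexing the vectors by `Fin k` lets `simp` sort every monomial into
increasing order, with `decide` choosing the swaps. -/

theorem sq_twoForm (a : R) (x₁ y₁ x₂ y₂ : M) :
    (ι R x₁ * ι R y₁ + ι R x₂ * ι R y₂ + a • (ι R x₁ * ι R y₂ - ι R y₁ * ι R x₂)) ^ 2 =
      (2 * (1 - a ^ 2)) • (ι R x₁ * ι R y₁ * (ι R x₂ * ι R y₂)) := by
  obtain ⟨m, rfl, rfl, rfl, rfl⟩ : ∃ m : Fin 4 → M, m 0 = x₁ ∧ m 1 = y₁ ∧ m 2 = x₂ ∧ m 3 = y₂ :=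
    ⟨![x₁, y₁, x₂, y₂], rfl, rfl, rfl, rfl⟩
  have swap (i j : Fin 4) (_ : j < i) := ι_mul_ι_swap (R := R) (m i) (m j)
  have swap_assoc (i j : Fin 4) (_ : j < i) := ι_mul_ι_mul_swap (R := R) (m i) (m j)
  simp only [sq, mul_add, add_mul, mul_sub, sub_mul, smul_mul_assoc, mul_smul_comm, mul_assoc]
  simp (disch := decide) only [ι_sq_zero, ι_mul_ι_mul_self, swap, swap_assoc, mul_neg, neg_neg,
    neg_zero, mul_zero, add_zero, zero_add, smul_zero, smul_neg, sub_zero, zero_sub]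
  module

theorem cube_threeForm (a : R) (x₁ y₁ x₂ y₂ x₃ y₃ : M) :
    (ι R x₁ * ι R y₁ + ι R x₂ * ι R y₂ + ι R x₃ * ι R y₃
      + a • (ι R x₁ * ι R y₂ - ι R y₁ * ι R x₂)
      + a • (ι R x₁ * ι R y₃ - ι R y₁ * ι R x₃)
      + a • (ι R x₂ * ι R y₃ - ι R y₂ * ι R x₃)) ^ 3 =
      (6 * (1 - a) ^ 2 * (1 + 2 * a)) •
        (ι R x₁ * ι R y₁ * (ι R x₂ * ι R y₂ * (ι R x₃ * ι R y₃))) := by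
  obtain ⟨m, rfl, rfl, rfl, rfl, rfl, rfl⟩ : ∃ m : Fin 6 → M,
      m 0 = x₁ ∧ m 1 = y₁ ∧ m 2 = x₂ ∧ m 3 = y₂ ∧ m 4 = x₃ ∧ m 5 = y₃ :=
    ⟨![x₁, y₁, x₂, y₂, x₃, y₃], rfl, rfl, rfl, rfl, rfl, rfl⟩
  have swap (i j : Fin 6) (_ : j < i) := ι_mul_ι_swap (R := R) (m i) (m j)
  have swap_assoc (i j : Fin 6) (_ : j < i) := ι_mul_ι_mul_swap (R := R) (m i) (m j)
  simp only [pow_succ, pow_zero, one_mul, mul_add, add_mul, mul_sub, sub_mul, smul_mul_assoc,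
    mul_smul_comm, mul_assoc]
  simp (disch := decide) only [ι_sq_zero, ι_mul_ι_mul_self, swap, swap_assoc, mul_neg, neg_neg,
    neg_zero, mul_zero, add_zero, zero_add, smul_zero, smul_neg, sub_zero, zero_sub]
  module

end ExteriorAlgebra

theorem volForm_eq_prod (n : ℕ) (I : Finset (Fin n)) (l : List (Fin n)) (hl : l.SortedLT)
    (hmem : ∀ i, i ∈ l ↔ i ∉ I) : volForm n I = (l.map (dxyE n)).prod := by
  rw [volForm, (Finset.sortedLT_sort _).eq_of_mem_iff hl (by simp [hmem])]

theorem coordProj_dualMap_dxF (n : ℕ) (I : Finset (Fin n)) (i : Fin n) :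
    (coordProj n I).dualMap (dxF n i) = if i ∈ I then 0 else dxF n i :=
  LinearMap.ext fun z => by split_ifs with hi <;> simp [coordProj, dxF, hi]

theorem coordProj_dualMap_dyF (n : ℕ) (I : Finset (Fin n)) (i : Fin n) :
    (coordProj n I).dualMap (dyF n i) = if i ∈ I then 0 else dyF n i :=
  LinearMap.ext fun z => by split_ifs with hi <;> simp [coordProj, dyF, hi]

theorem pullbackI_dxE (n : ℕ) (I : Finset (Fin n)) (i : Fin n) :
    pullbackI n I (dxE n i) = if i ∈ I then 0 else dxE n i := by
  rw [pullbackI, dxE, map_apply_ι, coordProj_dualMap_dxF, apply_ite (ι ℝ), map_zero]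

theorem pullbackI_dyE (n : ℕ) (I : Finset (Fin n)) (i : Fin n) :
    pullbackI n I (dyE n i) = if i ∈ I then 0 else dyE n i := by
  rw [pullbackI, dyE, map_apply_ι, coordProj_dualMap_dyF, apply_ite (ι ℝ), map_zero]

theorem omegaA_pow_three (a : ℝ) :
    omegaA a ^ 3 = (6 * (1 - a) ^ 2 * (1 + 2 * a)) • volForm 3 ∅ := by
  rw [volForm_eq_prod 3 ∅ [0, 1, 2] (by decide) (by decide)]
  simp only [omegaA, Fin.sum_univ_three, dxyE, List.map_cons, List.map_nil, List.prod_cons,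
    List.prod_nil, mul_one]
  exact cube_threeForm a _ _ _ _ _ _

theorem pullbackI_singleton_omegaA_sq (a : ℝ) (i : Fin 3) :
    pullbackI 3 {i} (omegaA a ^ 2) = (2 * (1 - a ^ 2)) • volForm 3 {i} := by
  rw [map_pow]
  obtain rfl | rfl | rfl : i = 0 ∨ i = 1 ∨ i = 2 := (by decide +revert)
    <;> [rw [volForm_eq_prod 3 {0} [1, 2] (by decide) (by decide)];
      rw [volForm_eq_prod 3 {1} [0, 2] (by decide) (by decide)];
      rw [volForm_eq_prod 3 {2} [0, 1] (by decide) (by decide)]]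
  all_goals
    simp only [omegaA, dxyE, Fin.sum_univ_three, map_add, map_sub, map_mul, map_smul,
      pullbackI_dxE, pullbackI_dyE, Finset.mem_singleton, Fin.isValue, Fin.reduceEq, ↓reduceIte,
      mul_zero, zero_mul, sub_self, smul_zero, add_zero, zero_add, List.map_cons, List.map_nil,
      List.prod_cons, List.prod_nil, mul_one]
    exact sq_twoForm a _ _ _ _

/-- for `a > 1`, the top power `ω³` is a positive multiple of the standard
(complex) volume form of `ℂ³`, while each restriction `ω²|_{ℂ³_i}` is a negative multiple
of the standard volume form of the coordinate hyperplane `ℂ³_i`. -/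
theorem stmt8 (a : ℝ) (ha : 1 < a) :
    (∃ c : ℝ, 0 < c ∧ (omegaA a) ^ 3 = c • volForm 3 ∅) ∧
    (∀ i : Fin 3, ∃ c : ℝ, c < 0 ∧
      pullbackI 3 {i} ((omegaA a) ^ 2) = c • volForm 3 {i}) := by
  have hcube : 0 < 6 * (1 - a) ^ 2 * (1 + 2 * a) := by
    have : 0 < (1 - a) ^ 2 := by nlinarith
    positivity
  have hsq : 2 * (1 - a ^ 2) < 0 := by nlinarith
  exact ⟨⟨_, hcube, omegaA_pow_three a⟩, fun i => ⟨_, hsq, pullbackI_singleton_omegaA_sq a i⟩⟩
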